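/- Let K_uu be an m×m symmetric positive definite matrix with largest eigenvalue λ₁, K_fu an n×m real matrix, K_ff an n×n symmetric matrix such that Σ := K_ff − K_fu K_uu^{−1} K_fuᵀ is positive definite with largest eigenvalue λ₂, and W an n×m real matrix with W ≠ K_fu K_uu^{−1}. Set κ := inf{(n/m)‖u‖² : u ∈ ℝ^m, ‖(W − K_fu K_uu^{−1})u‖ = 1}. Then for all real numbers 0 ≤ δ₂ ≤ δ₁, ∫_{ℝ^m} N(u; 0, K_uu) · ( ∫_{{f ∈ ℝⁿ : ‖f − Wu‖ > √n·δ₁}} N(f; K_fu K_uu^{−1} u, Σ) df ) du ≤ F(m, κ(δ₁ − δ₂)² m / λ₁) + F(n, δ₂² n / λ₂). -/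

import Mathlib

open Matrix MeasureTheory

/-- The Euclidean norm of a vector in `ℝⁿ`. -/
noncomputable def euclNorm {n : ℕ} (v : Fin n → ℝ) : ℝ :=
  Real.sqrt (∑ i, v i ^ 2)

/-- The multivariate Gaussian density `N(x; μ, Σ)` on `ℝᵏ`. -/
noncomputable def gaussDensity {k : ℕ} (x μ : Fin k → ℝ) (S : Matrix (Fin k) (Fin k) ℝ) : ℝ :=
  (2 * Real.pi) ^ (-(k : ℝ) / 2) * S.det ^ (-(1 : ℝ) / 2) *
    Real.exp (-((x - μ) ⬝ᵥ S⁻¹.mulVec (x - μ)) / 2)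

/-- The upper tail `F(a, b)` of the chi-square distribution with `a` degrees of freedom. -/
noncomputable def chiSqUpperTail (a : ℕ) (b : ℝ) : ℝ :=
  (∫ t in Set.Ioi (0 : ℝ), t ^ ((a : ℝ) / 2 - 1) * Real.exp (-t))⁻¹ *
    ∫ t in Set.Ioi (b / 2), t ^ ((a : ℝ) / 2 - 1) * Real.exp (-t)

namespace Stmt11Aux

open Real Set

/-! ### euclNorm -/

lemma euclNorm_eq_norm {k : ℕ} (v : Fin k → ℝ) :
    euclNorm v = ‖(WithLp.equiv 2 (Fin k → ℝ)).symm v‖ := by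
  rw [euclNorm, EuclideanSpace.norm_eq]
  congr 1
  refine Finset.sum_congr rfl fun i _ => ?_
  rw [WithLp.equiv_symm_apply, WithLp.ofLp_toLp, Real.norm_eq_abs, sq_abs]

lemma euclNorm_nonneg {k : ℕ} (v : Fin k → ℝ) : 0 ≤ euclNorm v := Real.sqrt_nonneg _

lemma euclNorm_add_le {k : ℕ} (v w : Fin k → ℝ) :
    euclNorm (v + w) ≤ euclNorm v + euclNorm w := by
  simp only [euclNorm_eq_norm]
  simpa using norm_add_le ((WithLp.equiv 2 (Fin k → ℝ)).symm v)
    ((WithLp.equiv 2 (Fin k → ℝ)).symm w)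

lemma euclNorm_smul {k : ℕ} (c : ℝ) (v : Fin k → ℝ) :
    euclNorm (c • v) = |c| * euclNorm v := by
  simp only [euclNorm_eq_norm]
  have : (WithLp.equiv 2 (Fin k → ℝ)).symm (c • v)
      = c • (WithLp.equiv 2 (Fin k → ℝ)).symm v := by
    rfl
  rw [this, norm_smul, Real.norm_eq_abs]

lemma sq_sum_of_euclNorm_gt {k : ℕ} {v : Fin k → ℝ} {c : ℝ} (hc : 0 ≤ c)
    (h : c < euclNorm v) : c ^ 2 < ∑ i, v i ^ 2 := by
  rw [euclNorm] at h
  rwa [Real.lt_sqrt hc] at h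

lemma sum_sq_nonneg {k : ℕ} (v : Fin k → ℝ) : 0 ≤ ∑ i, v i ^ 2 :=
  Finset.sum_nonneg fun i _ => sq_nonneg (v i)

/-! ### Densities -/

/-- The standard Gaussian density on `ℝᵏ` as a function of the squared norm. -/
noncomputable def stdDens (k : ℕ) (x : Fin k → ℝ) : ℝ :=
  (2 * π) ^ (-(k : ℝ) / 2) * Real.exp (-(∑ i, x i ^ 2) / 2)

lemma stdDens_nonneg (k : ℕ) (x : Fin k → ℝ) : 0 ≤ stdDens k x :=
  mul_nonneg (Real.rpow_nonneg (by positivity) _) (Real.exp_nonneg _)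

lemma gaussDensity_nonneg {k : ℕ} {S : Matrix (Fin k) (Fin k) ℝ} (hS : 0 ≤ S.det)
    (x μ : Fin k → ℝ) : 0 ≤ gaussDensity x μ S :=
  mul_nonneg (mul_nonneg (Real.rpow_nonneg (by positivity) _) (Real.rpow_nonneg hS _))
    (Real.exp_nonneg _)

lemma continuous_quadform {k : ℕ} (M : Matrix (Fin k) (Fin k) ℝ) (μ : Fin k → ℝ) :
    Continuous fun x : Fin k → ℝ => (x - μ) ⬝ᵥ M.mulVec (x - μ) := by
  simp only [dotProduct, Matrix.mulVec, Pi.sub_apply]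
  fun_prop

lemma measurable_gaussDensity {k : ℕ} (μ : Fin k → ℝ) (S : Matrix (Fin k) (Fin k) ℝ) :
    Measurable fun x : Fin k → ℝ => gaussDensity x μ S := by
  unfold gaussDensity
  exact (measurable_const.mul
    ((((continuous_quadform S⁻¹ μ).measurable).neg.div_const 2).exp))

lemma measurable_stdDens (k : ℕ) : Measurable (stdDens k) := by
  unfold stdDens
  have : Continuous fun x : Fin k → ℝ => ∑ i, x i ^ 2 := by fun_prop
  exact measurable_const.mul ((this.measurable.neg.div_const 2).exp)

lemma measurable_sumsq (k : ℕ) : Measurable fun x : Fin k → ℝ => ∑ i, x i ^ 2 := by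
  have : Continuous fun x : Fin k → ℝ => ∑ i, x i ^ 2 := by fun_prop
  exact this.measurable

lemma measurable_euclNorm {k : ℕ} : Measurable fun x : Fin k → ℝ => euclNorm x := by
  unfold euclNorm
  exact (measurable_sumsq k).sqrt

/-! ### The Gamma integral -/

lemma gammaIntegral_eq (a : ℕ) (ha : 0 < a) :
    (∫ t in Set.Ioi (0 : ℝ), t ^ ((a : ℝ) / 2 - 1) * Real.exp (-t)) = Real.Gamma ((a : ℝ) / 2) := by
  rw [Real.Gamma_eq_integral (by positivity)]
  refine setIntegral_congr_fun measurableSet_Ioi fun t _ => mul_comm _ _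

lemma chiSqUpperTail_nonneg (a : ℕ) {b : ℝ} (hb : 0 ≤ b) : 0 ≤ chiSqUpperTail a b := by
  unfold chiSqUpperTail
  refine mul_nonneg (inv_nonneg.mpr ?_) ?_
  · refine setIntegral_nonneg measurableSet_Ioi fun t ht => ?_
    exact mul_nonneg (Real.rpow_nonneg (le_of_lt ht) _) (Real.exp_nonneg _)
  · refine setIntegral_nonneg measurableSet_Ioi fun t ht => ?_
    have ht0 : 0 < t := lt_of_le_of_lt (by positivity) ht
    exact mul_nonneg (Real.rpow_nonneg ht0.le _) (Real.exp_nonneg _)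

lemma chiSqUpperTail_zero (a : ℕ) (ha : 0 < a) : chiSqUpperTail a 0 = 1 := by
  unfold chiSqUpperTail
  rw [zero_div, inv_mul_cancel₀]
  rw [gammaIntegral_eq a ha]
  exact (Real.Gamma_pos_of_pos (by positivity)).ne'

/-! ### Chi-square tail identity -/

lemma rpow_two' (y : ℝ) : y ^ (2:ℝ) = y ^ 2 := by
  rw [show (2:ℝ) = ((2:ℕ):ℝ) by norm_num, Real.rpow_natCast]

lemma chi_tail_euclidean (k : ℕ) (hk : 0 < k) {s : ℝ} (hs : 0 ≤ s) :
    (∫ x : EuclideanSpace ℝ (Fin k) in {x : EuclideanSpace ℝ (Fin k) | s < ‖x‖ ^ 2},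
      (2 * π) ^ (-(k : ℝ) / 2) * Real.exp (-‖x‖ ^ 2 / 2)) = chiSqUpperTail k s := by
  haveI : Nonempty (Fin k) := ⟨⟨0, hk⟩⟩
  haveI : Nontrivial (EuclideanSpace ℝ (Fin k)) :=
    ⟨⟨EuclideanSpace.single ⟨0, hk⟩ (1:ℝ), 0, by
      intro h
      have := congrArg (fun x : EuclideanSpace ℝ (Fin k) => x ⟨0, hk⟩) h
      simp [EuclideanSpace.single_apply] at this⟩⟩
  set q : ℝ := (k : ℝ) / 2 - 1 with hq
  set c : ℝ := (2 * π) ^ (-(k : ℝ) / 2) with hc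
  set fl : ℝ → ℝ :=
    Set.indicator {r : ℝ | s < r ^ 2} (fun r => c * Real.exp (-r ^ 2 / 2)) with hfl
  set G : ℝ → ℝ :=
    Set.indicator (Ioi s) (fun t => (1/2) * c * (t ^ q * Real.exp (-t/2))) with hG
  have hmeasS : MeasurableSet {x : EuclideanSpace ℝ (Fin k) | s < ‖x‖ ^ 2} := by
    have hcont : Continuous fun x : EuclideanSpace ℝ (Fin k) => ‖x‖ ^ 2 := by fun_prop
    exact measurableSet_lt measurable_const hcont.measurable
  -- step 1: rewrite as integral of a function of the norm
  have h1 : (∫ x : EuclideanSpace ℝ (Fin k) in {x : EuclideanSpace ℝ (Fin k) | s < ‖x‖ ^ 2},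
      c * Real.exp (-‖x‖ ^ 2 / 2)) = ∫ x : EuclideanSpace ℝ (Fin k), fl ‖x‖ := by
    rw [← integral_indicator hmeasS]
    refine integral_congr_ae (Filter.Eventually.of_forall fun x => ?_)
    by_cases h : s < ‖x‖ ^ 2
    · simp only [hfl, Set.indicator, Set.mem_setOf_eq, h, if_true]
    · simp only [hfl, Set.indicator, Set.mem_setOf_eq, h, if_false]
  -- step 2: spherical coordinates
  have h2 : (∫ x : EuclideanSpace ℝ (Fin k), fl ‖x‖)
      = k • (volume (Metric.ball (0 : EuclideanSpace ℝ (Fin k)) 1)).toReal •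
          ∫ y in Ioi (0:ℝ), y ^ (k - 1) • fl y := by
    have := MeasureTheory.integral_fun_norm_addHaar
      (volume : Measure (EuclideanSpace ℝ (Fin k))) fl
    rwa [finrank_euclideanSpace, Fintype.card_fin] at this
  -- step 3: substitution y = x², pointwise identification
  have h3 : (∫ y in Ioi (0:ℝ), y ^ (k - 1) • fl y)
      = ∫ x in Ioi (0:ℝ), (2 * x ^ ((2:ℝ) - 1)) • G (x ^ (2:ℝ)) := by
    refine setIntegral_congr_fun measurableSet_Ioi fun x hx => ?_
    have hx0 : (0:ℝ) < x := hx
    have hxpow : x ^ (2:ℝ) = x ^ 2 := rpow_two' x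
    have hknm : ((k - 1 : ℕ) : ℝ) = (k : ℝ) - 1 := by
      have : (1:ℕ) ≤ k := hk
      push_cast [this]
      ring
    have hxk : x ^ (k - 1 : ℕ) = x ^ ((k:ℝ) - 1) := by
      rw [← Real.rpow_natCast x (k-1), hknm]
    by_cases h : s < x ^ 2
    · have hmem2 : x ^ (2:ℝ) ∈ Ioi s := by rw [hxpow]; exact h
      rw [smul_eq_mul, smul_eq_mul, hfl, hG, Set.indicator_of_mem (by exact h),
        Set.indicator_of_mem hmem2, hxpow, hxk]
      have hsq : (x ^ 2 : ℝ) ^ q = x ^ ((k:ℝ) - 2) := by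
        rw [← hxpow, ← Real.rpow_mul hx0.le]
        congr 1
        rw [hq]; ring
      rw [hsq]
      have hxs : x ^ ((k:ℝ) - 1) = x ^ ((2:ℝ) - 1) * x ^ ((k:ℝ) - 2) := by
        rw [← Real.rpow_add hx0]
        congr 1
        ring
      rw [hxs]
      ring
    · have hmem2 : x ^ (2:ℝ) ∉ Ioi s := by rw [hxpow]; exact h
      rw [smul_eq_mul, smul_eq_mul, hfl, hG, Set.indicator_of_notMem (by exact h),
        Set.indicator_of_notMem hmem2]
      ring
  -- step 4: apply the rpow substitution
  have h4 : (∫ x in Ioi (0:ℝ), (2 * x ^ ((2:ℝ) - 1)) • G (x ^ (2:ℝ)))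
      = ∫ t in Ioi (0:ℝ), G t := integral_comp_rpow_Ioi_of_pos two_pos
  -- step 5: remove the indicator
  have h5 : (∫ t in Ioi (0:ℝ), G t)
      = ∫ t in Ioi s, (1/2) * c * (t ^ q * Real.exp (-t/2)) := by
    rw [hG, setIntegral_indicator measurableSet_Ioi, Set.Ioi_inter_Ioi, max_eq_right hs]
  -- step 6: substitution t = 2r
  have h6 : (∫ t in Ioi s, (1/2) * c * (t ^ q * Real.exp (-t/2)))
      = 2 * ∫ r in Ioi (s/2), (1/2) * c * ((2*r) ^ q * Real.exp (-(2*r)/2)) := by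
    have h6' := integral_comp_mul_left_Ioi
      (fun t => (1/2) * c * (t ^ q * Real.exp (-t/2))) (s/2) two_pos
    simp only [smul_eq_mul] at h6'
    rw [show (2:ℝ) * (s/2) = s by ring] at h6'
    rw [h6']
    ring
  have h7 : (∫ r in Ioi (s/2), (1/2) * c * ((2*r) ^ q * Real.exp (-(2*r)/2)))
      = ((1/2) * c * 2 ^ q) * ∫ r in Ioi (s/2), r ^ q * Real.exp (-r) := by
    rw [← integral_const_mul]
    refine setIntegral_congr_fun measurableSet_Ioi fun r hr => ?_
    have hr0 : (0:ℝ) < r := lt_of_le_of_lt (by positivity) hr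
    rw [Real.mul_rpow (by norm_num) hr0.le]
    have : -(2*r)/2 = -r := by ring
    rw [this]
    ring
  -- ball volume
  have hvb : (volume (Metric.ball (0 : EuclideanSpace ℝ (Fin k)) 1)).toReal
      = √π ^ k / Real.Gamma ((k:ℝ)/2 + 1) := by
    rw [EuclideanSpace.volume_ball, Fintype.card_fin]
    have hΓ : 0 < Real.Gamma ((k:ℝ)/2 + 1) := Real.Gamma_pos_of_pos (by positivity)
    rw [ENNReal.ofReal_one, one_pow, one_mul, ENNReal.toReal_ofReal (by positivity)]
  -- the coefficient identity
  have hcoef : (k:ℝ) * ((√π ^ k / Real.Gamma ((k:ℝ)/2 + 1)) * (2 * ((1/2) * c * 2 ^ q)))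
      = (Real.Gamma ((k:ℝ)/2))⁻¹ := by
    have hΓ : 0 < Real.Gamma ((k:ℝ)/2) := Real.Gamma_pos_of_pos (by positivity)
    have hk0 : (k:ℝ) ≠ 0 := Nat.cast_ne_zero.mpr hk.ne'
    rw [Real.Gamma_add_one (by positivity)]
    have hsqpi : (√π : ℝ) ^ k = π ^ ((k:ℝ)/2) := by
      rw [Real.sqrt_eq_rpow, ← Real.rpow_natCast (π ^ ((1:ℝ)/2)) k, ← Real.rpow_mul pi_pos.le]
      congr 1
      ring
    have hcsplit : c = 2 ^ (-(k:ℝ)/2) * π ^ (-(k:ℝ)/2) := by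
      rw [hc, Real.mul_rpow (by norm_num) pi_pos.le]
    rw [hsqpi, hcsplit, hq]
    have h2two : (2:ℝ) ^ (-(k:ℝ)/2) * 2 ^ ((k:ℝ)/2 - 1) = 2⁻¹ := by
      rw [← Real.rpow_add two_pos, show -(k:ℝ)/2 + ((k:ℝ)/2 - 1) = -1 by ring,
        Real.rpow_neg_one]
    have hpipi : (π:ℝ) ^ ((k:ℝ)/2) * π ^ (-(k:ℝ)/2) = 1 := by
      rw [← Real.rpow_add pi_pos, show (k:ℝ)/2 + -(k:ℝ)/2 = 0 by ring, Real.rpow_zero]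
    set a : ℝ := 2 ^ (-(k:ℝ)/2)
    set b : ℝ := 2 ^ ((k:ℝ)/2 - 1)
    set p : ℝ := π ^ ((k:ℝ)/2)
    set p' : ℝ := π ^ (-(k:ℝ)/2)
    have hΓ2 : Real.Gamma ((k:ℝ)/2) ≠ 0 := hΓ.ne'
    have hk2 : (k:ℝ)/2 ≠ 0 := by positivity
    have expand : (k:ℝ) * (p / ((k:ℝ)/2 * Real.Gamma ((k:ℝ)/2)) * (2 * (1/2 * (a * p') * b)))
        = ((k:ℝ) * ((p * p') * (a * b)) * 2 * (1/2)) / ((k:ℝ)/2 * Real.Gamma ((k:ℝ)/2)) := by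
      field_simp
    rw [expand, hpipi, h2two]
    field_simp
  -- chiSqUpperTail
  have hchi : chiSqUpperTail k s
      = (Real.Gamma ((k:ℝ)/2))⁻¹ * ∫ t in Ioi (s/2), t ^ q * Real.exp (-t) := by
    rw [chiSqUpperTail, gammaIntegral_eq k hk, hq]
  rw [h1, h2, h3, h4, h5, h6, h7, hvb, hchi, nsmul_eq_mul, smul_eq_mul]
  rw [← hcoef]
  ring

lemma norm_sq_euclidean {k : ℕ} (x : EuclideanSpace ℝ (Fin k)) :
    ‖x‖ ^ 2 = ∑ i, x i ^ 2 := by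
  rw [EuclideanSpace.norm_eq, Real.sq_sqrt (Finset.sum_nonneg fun i _ => sq_nonneg _)]
  refine Finset.sum_congr rfl fun i _ => ?_
  rw [Real.norm_eq_abs, sq_abs]

lemma chi_tail_pi (k : ℕ) (hk : 0 < k) {s : ℝ} (hs : 0 ≤ s) :
    (∫ x : Fin k → ℝ in {x : Fin k → ℝ | s < ∑ i, x i ^ 2}, stdDens k x)
      = chiSqUpperTail k s := by
  have hmp := EuclideanSpace.volume_preserving_symm_measurableEquiv_toLp (Fin k)
  have hemb := ((MeasurableEquiv.toLp 2 (Fin k → ℝ)).symm).measurableEmbedding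
  rw [← MeasurePreserving.setIntegral_preimage_emb hmp hemb (stdDens k)
    {x : Fin k → ℝ | s < ∑ i, x i ^ 2}]
  have hset : (⇑((MeasurableEquiv.toLp 2 (Fin k → ℝ)).symm) ⁻¹' {x : Fin k → ℝ | s < ∑ i, x i ^ 2})
      = {x : EuclideanSpace ℝ (Fin k) | s < ‖x‖ ^ 2} := by
    ext x
    simp only [Set.mem_preimage, Set.mem_setOf_eq, norm_sq_euclidean]
    rfl
  rw [hset, ← chi_tail_euclidean k hk hs]
  refine setIntegral_congr_fun (by
    have hcont : Continuous fun x : EuclideanSpace ℝ (Fin k) => ‖x‖ ^ 2 := by fun_prop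
    exact measurableSet_lt measurable_const hcont.measurable) fun x _ => ?_
  rw [stdDens]
  congr 2
  rw [norm_sq_euclidean]
  rfl

lemma integrable_stdDens (k : ℕ) : Integrable (stdDens k) (volume : Measure (Fin k → ℝ)) := by
  have hC : Integrable (fun v : EuclideanSpace ℝ (Fin k) =>
      Complex.exp (-(1/2 : ℂ) * (‖v‖ : ℂ) ^ 2 + (0:ℂ) * ((inner ℝ (0 : EuclideanSpace ℝ (Fin k)) v : ℝ) : ℂ))) volume :=
    GaussianFourier.integrable_cexp_neg_mul_sq_norm_add (by norm_num) 0 0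
  have hR : Integrable (fun v : EuclideanSpace ℝ (Fin k) => Real.exp (-‖v‖ ^ 2 / 2)) volume := by
    have := hC.norm
    refine this.congr (Filter.Eventually.of_forall fun v => ?_)
    simp only [Complex.norm_exp]
    congr 1
    simp [Complex.add_re, Complex.mul_re, Complex.ofReal_re, Complex.ofReal_im,
      Complex.div_re, Complex.normSq, ← Complex.ofReal_pow]
    ring
  have hE : Integrable (fun v : EuclideanSpace ℝ (Fin k) =>
      (2 * π) ^ (-(k:ℝ)/2) * Real.exp (-‖v‖ ^ 2 / 2)) volume := hR.const_mul _
  have hmp := EuclideanSpace.volume_preserving_symm_measurableEquiv_toLp (Fin k)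
  have hemb := ((MeasurableEquiv.toLp 2 (Fin k → ℝ)).symm).measurableEmbedding
  rw [← hmp.map_eq, hemb.integrable_map_iff]
  refine hE.congr (Filter.Eventually.of_forall fun v => ?_)
  show (2 * π) ^ (-(k:ℝ)/2) * Real.exp (-‖v‖ ^ 2 / 2)
      = stdDens k (⇑((MeasurableEquiv.toLp 2 (Fin k → ℝ)).symm) v)
  rw [stdDens]
  congr 2
  rw [norm_sq_euclidean]
  rfl

lemma measurableSet_sumsq_gt (k : ℕ) (s : ℝ) :
    MeasurableSet {x : Fin k → ℝ | s < ∑ i, x i ^ 2} :=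
  measurableSet_lt measurable_const (measurable_sumsq k)

lemma chi_tail_lintegral (k : ℕ) (hk : 0 < k) {s : ℝ} (hs : 0 ≤ s) :
    (∫⁻ x : Fin k → ℝ in {x : Fin k → ℝ | s < ∑ i, x i ^ 2}, ENNReal.ofReal (stdDens k x))
      = ENNReal.ofReal (chiSqUpperTail k s) := by
  rw [← ofReal_integral_eq_lintegral_ofReal ((integrable_stdDens k).integrableOn)
    (Filter.Eventually.of_forall fun x => stdDens_nonneg k x), chi_tail_pi k hk hs]

lemma lintegral_stdDens (k : ℕ) (hk : 0 < k) :
    (∫⁻ x : Fin k → ℝ, ENNReal.ofReal (stdDens k x)) = 1 := by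
  haveI : Nonempty (Fin k) := ⟨⟨0, hk⟩⟩
  have hsplit := lintegral_add_compl (μ := (volume : Measure (Fin k → ℝ)))
    (fun x => ENNReal.ofReal (stdDens k x)) (measurableSet_sumsq_gt k 0)
  rw [← hsplit, chi_tail_lintegral k hk le_rfl, chiSqUpperTail_zero k hk]
  have hcompl : {x : Fin k → ℝ | (0:ℝ) < ∑ i, x i ^ 2}ᶜ = {(0 : Fin k → ℝ)} := by
    ext x
    simp only [Set.mem_compl_iff, Set.mem_setOf_eq, not_lt, Set.mem_singleton_iff]
    constructor
    · intro h
      have h0 : ∑ i, x i ^ 2 = 0 := le_antisymm h (sum_sq_nonneg x)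
      funext i
      have := (Finset.sum_eq_zero_iff_of_nonneg (fun i _ => sq_nonneg (x i))).mp h0 i
        (Finset.mem_univ i)
      exact pow_eq_zero_iff (n := 2) (by norm_num) |>.mp this
    · rintro rfl
      simp
  rw [hcompl, setLIntegral_measure_zero _ _ (measure_singleton _)]
  simp

/-! ### Quadratic form bounds via eigenvalues -/

lemma isHermitian_of_isSymm {k : ℕ} {K : Matrix (Fin k) (Fin k) ℝ} (h : K.IsSymm) :
    K.IsHermitian := by
  rwa [Matrix.IsHermitian, Matrix.conjTranspose_eq_transpose_of_trivial]

lemma dotProduct_self_eq_sum_sq {k : ℕ} (v : Fin k → ℝ) : v ⬝ᵥ v = ∑ i, v i ^ 2 := by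
  simp [dotProduct, sq]

lemma dotProduct_self_pos {k : ℕ} {v : Fin k → ℝ} (hv : v ≠ 0) : 0 < v ⬝ᵥ v := by
  rw [dotProduct_self_eq_sum_sq]
  obtain ⟨i, hi⟩ := Function.ne_iff.mp hv
  exact Finset.sum_pos' (fun j _ => sq_nonneg _) ⟨i, Finset.mem_univ i, lt_of_le_of_ne (sq_nonneg _) (Ne.symm (pow_ne_zero 2 hi))⟩

lemma lam_pos {k : ℕ} {K : Matrix (Fin k) (Fin k) ℝ} (hPD : K.PosDef) {lam : ℝ}
    (hEx : ∃ v : Fin k → ℝ, v ≠ 0 ∧ K.mulVec v = lam • v) : 0 < lam := by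
  obtain ⟨v, hv, hKv⟩ := hEx
  have h1 : 0 < v ⬝ᵥ K.mulVec v := by
    have := hPD.dotProduct_mulVec_pos hv
    simpa using this
  rw [hKv] at h1
  have h2 : v ⬝ᵥ (lam • v) = lam * (v ⬝ᵥ v) := by
    simp [dotProduct, Finset.mul_sum]
    refine Finset.sum_congr rfl fun i _ => by ring
  rw [h2] at h1
  have h3 : 0 < v ⬝ᵥ v := dotProduct_self_pos hv
  nlinarith

lemma eigenvalues_le {k : ℕ} {K : Matrix (Fin k) (Fin k) ℝ} (hsym : K.IsSymm) {lam : ℝ}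
    (hLe : ∀ (μ : ℝ) (v : Fin k → ℝ), v ≠ 0 → K.mulVec v = μ • v → μ ≤ lam) :
    ∀ i, (isHermitian_of_isSymm hsym).eigenvalues i ≤ lam := by
  intro i
  have hv := (isHermitian_of_isSymm hsym).mulVec_eigenvectorBasis i
  refine hLe _ _ ?_ hv
  intro h0
  refine (isHermitian_of_isSymm hsym).eigenvectorBasis.orthonormal.ne_zero i ?_
  ext j
  exact congrFun h0 j

lemma quadform_le {k : ℕ} {K : Matrix (Fin k) (Fin k) ℝ} (hsym : K.IsSymm) {lam : ℝ}
    (hLe : ∀ (μ : ℝ) (v : Fin k → ℝ), v ≠ 0 → K.mulVec v = μ • v → μ ≤ lam)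
    (v : Fin k → ℝ) :
    v ⬝ᵥ K.mulVec v ≤ lam * ∑ i, v i ^ 2 := by
  classical
  set hH := isHermitian_of_isSymm hsym with hHdef
  set U : Matrix (Fin k) (Fin k) ℝ := (hH.eigenvectorUnitary : Matrix (Fin k) (Fin k) ℝ) with hU
  have hUmem : U ∈ Matrix.unitaryGroup (Fin k) ℝ := hH.eigenvectorUnitary.2
  have hUU : U * star U = 1 := Matrix.mem_unitaryGroup_iff.mp hUmem
  have hstarT : star U = Uᵀ := Matrix.conjTranspose_eq_transpose_of_trivial U
  set w : Fin k → ℝ := (star U).mulVec v with hw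
  have hD : Matrix.diagonal (RCLike.ofReal ∘ hH.eigenvalues) = Matrix.diagonal hH.eigenvalues := by
    rfl
  have hvecMul : Matrix.vecMul v U = w := by
    rw [hw, hstarT, ← Matrix.vecMul_transpose, Matrix.transpose_transpose]
  have hspec : v ⬝ᵥ K.mulVec v = w ⬝ᵥ (Matrix.diagonal hH.eigenvalues).mulVec w := by
    conv_lhs => rw [hH.spectral_theorem, Unitary.conjStarAlgAut_apply]
    rw [hD, ← Matrix.mulVec_mulVec, ← Matrix.mulVec_mulVec, Matrix.dotProduct_mulVec, hvecMul]
  have hsum : w ⬝ᵥ (Matrix.diagonal hH.eigenvalues).mulVec w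
      = ∑ i, hH.eigenvalues i * w i ^ 2 := by
    simp only [dotProduct, Matrix.mulVec_diagonal]
    exact Finset.sum_congr rfl fun i _ => by ring
  have hww : ∑ i, w i ^ 2 = ∑ i, v i ^ 2 := by
    have h1 : w ⬝ᵥ w = v ⬝ᵥ v := by
      rw [hw]
      rw [Matrix.dotProduct_mulVec]
      have : Matrix.vecMul ((star U).mulVec v) (star U) = (U * star U).mulVec v := by
        rw [hstarT, Matrix.vecMul_transpose, Matrix.mulVec_mulVec]
      rw [this, hUU, Matrix.one_mulVec]
    rw [← dotProduct_self_eq_sum_sq, ← dotProduct_self_eq_sum_sq, h1]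
  rw [hspec, hsum, ← hww, Finset.mul_sum]
  refine Finset.sum_le_sum fun i _ => ?_
  exact mul_le_mul_of_nonneg_right (eigenvalues_le hsym hLe i) (sq_nonneg _)

/-! ### Change of variables for a Gaussian with general covariance -/

open scoped MatrixOrder in
noncomputable def _root_.Matrix.PosSemidef.sqrt {k : ℕ} {K : Matrix (Fin k) (Fin k) ℝ}
    (_ : K.PosSemidef) : Matrix (Fin k) (Fin k) ℝ :=
  CFC.sqrt K

open scoped MatrixOrder in
lemma _root_.Matrix.PosSemidef.sqrt_mul_self {k : ℕ} {K : Matrix (Fin k) (Fin k) ℝ}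
    (hA : K.PosSemidef) : hA.sqrt * hA.sqrt = K :=
  CFC.sqrt_mul_sqrt_self K hA.nonneg

open scoped MatrixOrder in
lemma _root_.Matrix.PosSemidef.posSemidef_sqrt {k : ℕ} {K : Matrix (Fin k) (Fin k) ℝ}
    (hA : K.PosSemidef) : hA.sqrt.PosSemidef :=
  (CFC.sqrt_nonneg K).posSemidef

section Cov

variable {k : ℕ} {K : Matrix (Fin k) (Fin k) ℝ}

lemma sqrt_facts (hPD : K.PosDef) :
    (hPD.posSemidef.sqrt * hPD.posSemidef.sqrt = K) ∧ 0 < (hPD.posSemidef.sqrt).det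
      ∧ (hPD.posSemidef.sqrt)ᵀ = hPD.posSemidef.sqrt := by
  have h2 : hPD.posSemidef.sqrt * hPD.posSemidef.sqrt = K := hPD.posSemidef.sqrt_mul_self
  have hsq : (hPD.posSemidef.sqrt).det ^ 2 = K.det := by
    rw [sq, ← Matrix.det_mul, h2]
  have hnn : 0 ≤ (hPD.posSemidef.sqrt).det := by
    rw [(hPD.posSemidef.posSemidef_sqrt.isHermitian).det_eq_prod_eigenvalues]
    refine Finset.prod_nonneg fun i _ => ?_
    simpa using hPD.posSemidef.posSemidef_sqrt.eigenvalues_nonneg i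
  have hpos : 0 < (hPD.posSemidef.sqrt).det := by
    rcases lt_or_eq_of_le hnn with h | h
    · exact h
    · exfalso
      have := hPD.det_pos
      rw [← hsq, ← h] at this
      simp at this
  refine ⟨h2, hpos, ?_⟩
  have := hPD.posSemidef.posSemidef_sqrt.isHermitian
  rwa [Matrix.IsHermitian, Matrix.conjTranspose_eq_transpose_of_trivial] at this

lemma mulVec_sq_eq_quadform (hPD : K.PosDef) (y : Fin k → ℝ) :
    ∑ i, ((hPD.posSemidef.sqrt).mulVec y) i ^ 2 = y ⬝ᵥ K.mulVec y := by
  obtain ⟨h2, hdet, hT⟩ := sqrt_facts hPD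
  set L := hPD.posSemidef.sqrt
  rw [← dotProduct_self_eq_sum_sq, Matrix.dotProduct_mulVec, ← hT,
    Matrix.vecMul_transpose, Matrix.mulVec_mulVec, hT, show L * L = K from h2,
    dotProduct_comm, Matrix.dotProduct_mulVec]

lemma gauss_cov_lintegral (hsym : K.IsSymm) (hPD : K.PosDef)
    (f : (Fin k → ℝ) → ENNReal) (hf : Measurable f) :
    (∫⁻ x : Fin k → ℝ, f x * ENNReal.ofReal (gaussDensity x 0 K))
      = ∫⁻ y : Fin k → ℝ,
          f ((hPD.posSemidef.sqrt).mulVec y) * ENNReal.ofReal (stdDens k y) := by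
  obtain ⟨h2, hdet, hT⟩ := sqrt_facts hPD
  set L := hPD.posSemidef.sqrt with hL
  have hdet_ne : L.det ≠ 0 := hdet.ne'
  have hmap := Real.map_matrix_volume_pi_eq_smul_volume_pi hdet_ne
  have hvol : (volume : Measure (Fin k → ℝ))
      = ENNReal.ofReal L.det • Measure.map (⇑(Matrix.toLin' L)) volume := by
    rw [hmap, smul_smul, abs_of_pos (inv_pos.mpr hdet), ← ENNReal.ofReal_mul hdet.le,
      mul_inv_cancel₀ hdet_ne, ENNReal.ofReal_one, one_smul]
  have hmeasg : Measurable fun x : Fin k → ℝ => f x * ENNReal.ofReal (gaussDensity x 0 K) :=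
    hf.mul (ENNReal.measurable_ofReal.comp (measurable_gaussDensity 0 K))
  have hmeasT : Measurable (⇑(Matrix.toLin' L) : (Fin k → ℝ) → (Fin k → ℝ)) :=
    (LinearMap.continuous_of_finiteDimensional _).measurable
  conv_lhs => rw [hvol]
  rw [lintegral_smul_measure, lintegral_map hmeasg hmeasT]
  rw [smul_eq_mul, ← lintegral_const_mul' _ _ ENNReal.ofReal_ne_top]
  refine lintegral_congr fun y => ?_
  have hTy : (Matrix.toLin' L) y = L.mulVec y := Matrix.toLin'_apply L y
  rw [hTy]
  -- quadratic form identity inside the exponent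
  have hKinv : K⁻¹ * L = L⁻¹ := by
    rw [← h2, Matrix.mul_inv_rev, Matrix.mul_assoc,
      Matrix.nonsing_inv_mul L (isUnit_iff_ne_zero.mpr hdet_ne), Matrix.mul_one]
  have hinvT : (L⁻¹)ᵀ = L⁻¹ := by rw [Matrix.transpose_nonsing_inv, hT]
  have hquad : (L.mulVec y) ⬝ᵥ K⁻¹.mulVec (L.mulVec y) = ∑ i, y i ^ 2 := by
    rw [Matrix.mulVec_mulVec, hKinv, Matrix.dotProduct_mulVec, ← hinvT,
      Matrix.vecMul_transpose, Matrix.mulVec_mulVec,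
      Matrix.nonsing_inv_mul L (isUnit_iff_ne_zero.mpr hdet_ne), Matrix.one_mulVec,
      dotProduct_self_eq_sum_sq]
  have hgauss : gaussDensity (L.mulVec y) 0 K
      = (2 * π) ^ (-(k:ℝ)/2) * K.det ^ (-(1:ℝ)/2) * Real.exp (-(∑ i, y i ^ 2) / 2) := by
    rw [gaussDensity, sub_zero, hquad]
  have hdetKL : L.det * K.det ^ (-(1:ℝ)/2) = 1 := by
    have hKdet : K.det = L.det ^ 2 := by rw [← h2, Matrix.det_mul, ← sq]
    rw [hKdet, ← Real.rpow_natCast L.det 2, ← Real.rpow_mul hdet.le,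
      show ((2:ℕ):ℝ) * (-(1:ℝ)/2) = -1 by norm_num, Real.rpow_neg_one,
      mul_inv_cancel₀ hdet_ne]
  rw [hgauss, stdDens, ← mul_assoc, mul_comm (ENNReal.ofReal L.det) (f (L.mulVec y)),
    mul_assoc, ← ENNReal.ofReal_mul hdet.le]
  congr 2
  rw [show L.det * ((2 * π) ^ (-(k:ℝ)/2) * K.det ^ (-(1:ℝ)/2) * Real.exp (-(∑ i, y i ^ 2) / 2))
      = (L.det * K.det ^ (-(1:ℝ)/2)) * ((2 * π) ^ (-(k:ℝ)/2) * Real.exp (-(∑ i, y i ^ 2) / 2))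
    from by ring, hdetKL, one_mul]

lemma gauss_total (hsym : K.IsSymm) (hPD : K.PosDef) (hk : 0 < k) :
    (∫⁻ x : Fin k → ℝ, ENNReal.ofReal (gaussDensity x 0 K)) = 1 := by
  have h := gauss_cov_lintegral hsym hPD (fun _ => 1) measurable_const
  simp only [one_mul] at h
  rw [h, lintegral_stdDens k hk]

lemma gauss_tail_le (hsym : K.IsSymm) (hPD : K.PosDef) (hk : 0 < k) {lam : ℝ}
    (hEx : ∃ v : Fin k → ℝ, v ≠ 0 ∧ K.mulVec v = lam • v)
    (hLe : ∀ (μ : ℝ) (v : Fin k → ℝ), v ≠ 0 → K.mulVec v = μ • v → μ ≤ lam)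
    {s : ℝ} (hs : 0 ≤ s) {S : Set (Fin k → ℝ)} (hS : S ⊆ {x : Fin k → ℝ | s < ∑ i, x i ^ 2}) :
    (∫⁻ x in S, ENNReal.ofReal (gaussDensity x 0 K))
      ≤ ENNReal.ofReal (chiSqUpperTail k (s / lam)) := by
  have hlam : 0 < lam := lam_pos hPD hEx
  calc (∫⁻ x in S, ENNReal.ofReal (gaussDensity x 0 K))
      ≤ ∫⁻ x in {x : Fin k → ℝ | s < ∑ i, x i ^ 2}, ENNReal.ofReal (gaussDensity x 0 K) :=
        lintegral_mono_set hS
    _ = ∫⁻ x : Fin k → ℝ, (Set.indicator {x : Fin k → ℝ | s < ∑ i, x i ^ 2}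
          (fun _ => (1:ENNReal)) x) * ENNReal.ofReal (gaussDensity x 0 K) := by
        rw [← lintegral_indicator (measurableSet_sumsq_gt k s)]
        refine lintegral_congr fun x => ?_
        by_cases h : x ∈ {x : Fin k → ℝ | s < ∑ i, x i ^ 2}
        · rw [Set.indicator_of_mem h, Set.indicator_of_mem h, one_mul]
        · rw [Set.indicator_of_notMem h, Set.indicator_of_notMem h, zero_mul]
    _ = ∫⁻ y : Fin k → ℝ, (Set.indicator {x : Fin k → ℝ | s < ∑ i, x i ^ 2}
          (fun _ => (1:ENNReal)) ((hPD.posSemidef.sqrt).mulVec y)) * ENNReal.ofReal (stdDens k y) :=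
        gauss_cov_lintegral hsym hPD _
          (measurable_one.indicator (measurableSet_sumsq_gt k s))
    _ ≤ ∫⁻ y : Fin k → ℝ, (Set.indicator {y : Fin k → ℝ | s / lam < ∑ i, y i ^ 2}
          (fun _ => (1:ENNReal)) y) * ENNReal.ofReal (stdDens k y) := by
        refine lintegral_mono fun y => ?_
        refine mul_le_mul_left ?_ _
        by_cases h : (hPD.posSemidef.sqrt).mulVec y ∈ {x : Fin k → ℝ | s < ∑ i, x i ^ 2}
        · have hy : y ∈ {y : Fin k → ℝ | s / lam < ∑ i, y i ^ 2} := by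
            have h1 : s < ∑ i, ((hPD.posSemidef.sqrt).mulVec y) i ^ 2 := h
            rw [mulVec_sq_eq_quadform hPD y] at h1
            have h2 : y ⬝ᵥ K.mulVec y ≤ lam * ∑ i, y i ^ 2 := quadform_le hsym hLe y
            have : s < lam * ∑ i, y i ^ 2 := lt_of_lt_of_le h1 h2
            exact (div_lt_iff₀' hlam).mpr this
          rw [Set.indicator_of_mem h, Set.indicator_of_mem hy]
        · rw [Set.indicator_of_notMem h]
          exact zero_le
    _ = ∫⁻ y in {y : Fin k → ℝ | s / lam < ∑ i, y i ^ 2}, ENNReal.ofReal (stdDens k y) := by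
        rw [← lintegral_indicator (measurableSet_sumsq_gt k (s/lam))]
        refine lintegral_congr fun y => ?_
        by_cases h : y ∈ {y : Fin k → ℝ | s / lam < ∑ i, y i ^ 2}
        · rw [Set.indicator_of_mem h, Set.indicator_of_mem h, one_mul]
        · rw [Set.indicator_of_notMem h, Set.indicator_of_notMem h, zero_mul]
    _ = ENNReal.ofReal (chiSqUpperTail k (s / lam)) :=
        chi_tail_lintegral k hk (div_nonneg hs hlam.le)

end Cov

/-! ### Translation invariance -/

lemma gaussDensity_shift {k : ℕ} (x μv : Fin k → ℝ) (S : Matrix (Fin k) (Fin k) ℝ) :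
    gaussDensity x μv S = gaussDensity (x - μv) 0 S := by
  unfold gaussDensity
  rw [sub_zero]

lemma lintegral_shift {k : ℕ} (F : (Fin k → ℝ) → ENNReal) (μv : Fin k → ℝ) :
    (∫⁻ f : Fin k → ℝ, F (f - μv)) = ∫⁻ f : Fin k → ℝ, F f := by
  simp_rw [sub_eq_add_neg]
  exact lintegral_add_right_eq_self F (-μv)

lemma measurableSet_euclNorm_gt {k : ℕ} (c : ℝ) (w : Fin k → ℝ) :
    MeasurableSet {f : Fin k → ℝ | c < euclNorm (f - w)} :=
  measurableSet_lt measurable_const (measurable_euclNorm.comp (measurable_id.sub measurable_const))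

lemma gauss_shift_tail {k : ℕ} (Sg : Matrix (Fin k) (Fin k) ℝ) (μv : Fin k → ℝ) (c : ℝ) :
    (∫⁻ f in {f : Fin k → ℝ | c < euclNorm (f - μv)}, ENNReal.ofReal (gaussDensity f μv Sg))
      = ∫⁻ g in {g : Fin k → ℝ | c < euclNorm g}, ENNReal.ofReal (gaussDensity g 0 Sg) := by
  have hms0 : MeasurableSet {g : Fin k → ℝ | c < euclNorm g} := by
    have := measurableSet_euclNorm_gt c (0 : Fin k → ℝ)
    simpa using this
  set F : (Fin k → ℝ) → ENNReal := fun g =>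
    Set.indicator {g : Fin k → ℝ | c < euclNorm g}
      (fun g => ENNReal.ofReal (gaussDensity g 0 Sg)) g with hF
  have h1 : (∫⁻ f in {f : Fin k → ℝ | c < euclNorm (f - μv)},
      ENNReal.ofReal (gaussDensity f μv Sg)) = ∫⁻ f : Fin k → ℝ, F (f - μv) := by
    rw [← lintegral_indicator (measurableSet_euclNorm_gt c μv)]
    refine lintegral_congr fun f => ?_
    by_cases h : c < euclNorm (f - μv)
    · simp only [hF, Set.indicator, Set.mem_setOf_eq, h, if_true]
      rw [gaussDensity_shift]
    · simp only [hF, Set.indicator, Set.mem_setOf_eq, h, if_false]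
  rw [h1, lintegral_shift F μv, hF, lintegral_indicator hms0]

lemma gauss_shift_total {k : ℕ} (hk : 0 < k) {Sg : Matrix (Fin k) (Fin k) ℝ}
    (hSgSymm : Sg.IsSymm) (hSgPD : Sg.PosDef) (μv : Fin k → ℝ) :
    (∫⁻ f : Fin k → ℝ, ENNReal.ofReal (gaussDensity f μv Sg)) = 1 := by
  have h1 : (∫⁻ f : Fin k → ℝ, ENNReal.ofReal (gaussDensity f μv Sg))
      = ∫⁻ f : Fin k → ℝ, (fun g => ENNReal.ofReal (gaussDensity g 0 Sg)) (f - μv) := by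
    refine lintegral_congr fun f => ?_
    rw [gaussDensity_shift]
  rw [h1, lintegral_shift (fun g => ENNReal.ofReal (gaussDensity g 0 Sg)) μv,
    gauss_total hSgSymm hSgPD hk]

lemma euclNorm_neg {k : ℕ} (v : Fin k → ℝ) : euclNorm (-v) = euclNorm v := by
  unfold euclNorm
  congr 1
  refine Finset.sum_congr rfl fun i _ => ?_
  simp [neg_sq]

lemma euclNorm_sub_le {k : ℕ} (x y : Fin k → ℝ) :
    euclNorm (x - y) ≤ euclNorm x + euclNorm y := by
  rw [sub_eq_add_neg]
  exact (euclNorm_add_le x (-y)).trans (by rw [euclNorm_neg])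

lemma sum_sq_pos {k : ℕ} {v : Fin k → ℝ} (hv : v ≠ 0) : 0 < ∑ i, v i ^ 2 := by
  rw [← dotProduct_self_eq_sum_sq]
  exact dotProduct_self_pos hv

end Stmt11Aux

open Stmt11Aux Real Set in
/-- Lemma 3 of the paper, the two-sided tail bound
for the prior mass of the region `‖f − Wu‖ > √n δ₁`. -/
theorem stmt_11 (n m : ℕ)
    (K_uu : Matrix (Fin m) (Fin m) ℝ) (hKuuSymm : K_uu.IsSymm) (hKuuPD : K_uu.PosDef)
    (K_fu : Matrix (Fin n) (Fin m) ℝ)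
    (K_ff : Matrix (Fin n) (Fin n) ℝ) (hKffSymm : K_ff.IsSymm)
    (W : Matrix (Fin n) (Fin m) ℝ) (hW : W ≠ K_fu * K_uu⁻¹)
    (Sig : Matrix (Fin n) (Fin n) ℝ) (hSig : Sig = K_ff - K_fu * K_uu⁻¹ * K_fuᵀ)
    (hSigPD : Sig.PosDef)
    (lam₁ lam₂ : ℝ)
    (hlam₁Le : ∀ (μ : ℝ) (v : Fin m → ℝ), v ≠ 0 → K_uu.mulVec v = μ • v → μ ≤ lam₁)
    (hlam₁Ex : ∃ v : Fin m → ℝ, v ≠ 0 ∧ K_uu.mulVec v = lam₁ • v)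
    (hlam₂Le : ∀ (μ : ℝ) (v : Fin n → ℝ), v ≠ 0 → Sig.mulVec v = μ • v → μ ≤ lam₂)
    (hlam₂Ex : ∃ v : Fin n → ℝ, v ≠ 0 ∧ Sig.mulVec v = lam₂ • v)
    (κ : ℝ)
    (hκ : κ = sInf {c : ℝ | ∃ u : Fin m → ℝ,
        euclNorm ((W - K_fu * K_uu⁻¹).mulVec u) = 1 ∧ c = (n / m : ℝ) * ∑ j, u j ^ 2}) :
    ∀ δ₁ δ₂ : ℝ, 0 ≤ δ₂ → δ₂ ≤ δ₁ →
      (∫ u : Fin m → ℝ, gaussDensity u 0 K_uu *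
          ∫ f in {f : Fin n → ℝ | euclNorm (f - W.mulVec u) > Real.sqrt n * δ₁},
            gaussDensity f ((K_fu * K_uu⁻¹).mulVec u) Sig)
        ≤ chiSqUpperTail m (κ * (δ₁ - δ₂) ^ 2 * m / lam₁) +
            chiSqUpperTail n (δ₂ ^ 2 * n / lam₂) := by
  intro δ₁ δ₂ hδ₂0 hδ₂₁
  classical
  simp only [gt_iff_lt]
  -- positivity of dimensions
  have hm : 0 < m := by
    rcases hlam₁Ex with ⟨v, hv, -⟩
    rcases Nat.eq_zero_or_pos m with rfl | h
    · exact absurd (funext fun i => i.elim0) hv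
    · exact h
  have hn : 0 < n := by
    rcases hlam₂Ex with ⟨v, hv, -⟩
    rcases Nat.eq_zero_or_pos n with rfl | h
    · exact absurd (funext fun i => i.elim0) hv
    · exact h
  have hlam₁ : 0 < lam₁ := lam_pos hKuuPD hlam₁Ex
  have hlam₂ : 0 < lam₂ := lam_pos hSigPD hlam₂Ex
  have hδdiff : 0 ≤ δ₁ - δ₂ := sub_nonneg.mpr hδ₂₁
  have hmR : (0:ℝ) < m := Nat.cast_pos.mpr hm
  have hnR : (0:ℝ) < n := Nat.cast_pos.mpr hn
  set A : Matrix (Fin n) (Fin m) ℝ := W - K_fu * K_uu⁻¹ with hAdef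
  set Q : Matrix (Fin n) (Fin m) ℝ := K_fu * K_uu⁻¹ with hQdef
  have hAne : A ≠ 0 := sub_ne_zero.mpr hW
  -- Sigma is symmetric
  have hKuuInvT : (K_uu⁻¹)ᵀ = K_uu⁻¹ := by
    rw [Matrix.transpose_nonsing_inv, hKuuSymm.eq]
  have hSigSymm : Sig.IsSymm := by
    show Sigᵀ = Sig
    rw [hSig, Matrix.transpose_sub, hKffSymm.eq, Matrix.transpose_mul,
      Matrix.transpose_mul, Matrix.transpose_transpose, hKuuInvT, Matrix.mul_assoc]
  -- an entry of A is nonzero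
  obtain ⟨i0, j0, hij⟩ : ∃ i j, A i j ≠ 0 := by
    by_contra hcon
    push_neg at hcon
    exact hAne (Matrix.ext fun i j => by simpa using hcon i j)
  set C : ℝ := ∑ i, ∑ j, A i j ^ 2 with hCdef
  have hCpos : 0 < C :=
    Finset.sum_pos' (fun i _ => Finset.sum_nonneg fun j _ => sq_nonneg _)
      ⟨i0, Finset.mem_univ i0, Finset.sum_pos' (fun j _ => sq_nonneg _)
        ⟨j0, Finset.mem_univ j0,
          lt_of_le_of_ne (sq_nonneg _) (Ne.symm (pow_ne_zero 2 hij))⟩⟩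
  -- the set defining κ
  set Sκ : Set ℝ := {c : ℝ | ∃ u : Fin m → ℝ,
      euclNorm (A.mulVec u) = 1 ∧ c = (n / m : ℝ) * ∑ j, u j ^ 2} with hSκdef
  have hSlb : ∀ c ∈ Sκ, (n / m : ℝ) / C ≤ c := by
    rintro c ⟨u, hu1, rfl⟩
    have hsum : ∑ i, (A.mulVec u) i ^ 2 = 1 := by
      have h := congrArg (fun t : ℝ => t ^ 2) hu1
      simp only [euclNorm] at h
      rwa [Real.sq_sqrt (sum_sq_nonneg _), one_pow] at h
    have hCS : ∀ i, (A.mulVec u) i ^ 2 ≤ (∑ j, A i j ^ 2) * ∑ j, u j ^ 2 := fun i => by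
      have h := Finset.sum_mul_sq_le_sq_mul_sq Finset.univ (fun j => A i j) u
      simpa [Matrix.mulVec, dotProduct] using h
    have h1C : 1 ≤ C * ∑ j, u j ^ 2 := by
      rw [← hsum, hCdef]
      calc ∑ i, (A.mulVec u) i ^ 2
          ≤ ∑ i, (∑ j, A i j ^ 2) * ∑ j, u j ^ 2 := Finset.sum_le_sum fun i _ => hCS i
        _ = (∑ i, ∑ j, A i j ^ 2) * ∑ j, u j ^ 2 := by rw [Finset.sum_mul]
    have husq : 1 / C ≤ ∑ j, u j ^ 2 := by
      rw [div_le_iff₀ hCpos]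
      linarith
    calc (n / m : ℝ) / C = (n / m : ℝ) * (1 / C) := by ring
      _ ≤ (n / m : ℝ) * ∑ j, u j ^ 2 :=
          mul_le_mul_of_nonneg_left husq (div_pos hnR hmR).le
  have hSbdd : BddBelow Sκ := ⟨(n / m : ℝ) / C, fun c hc => hSlb c hc⟩
  have hSne : Sκ.Nonempty := by
    set u0 : Fin m → ℝ := Pi.single j0 1 with hu0
    have hAu0 : A.mulVec u0 ≠ 0 := by
      intro hz
      have h : (A.mulVec u0) i0 = A i0 j0 := by
        simp [hu0, Matrix.mulVec_single]
      rw [hz] at h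
      exact hij (by simpa using h.symm)
    have ha : 0 < euclNorm (A.mulVec u0) :=
      Real.sqrt_pos.mpr (sum_sq_pos hAu0)
    refine ⟨(n / m : ℝ) * ∑ j, ((euclNorm (A.mulVec u0))⁻¹ • u0) j ^ 2,
      (euclNorm (A.mulVec u0))⁻¹ • u0, ?_, rfl⟩
    rw [Matrix.mulVec_smul, euclNorm_smul, abs_of_pos (inv_pos.mpr ha),
      inv_mul_cancel₀ ha.ne']
  have hκpos : 0 < κ := by
    rw [hκ]
    exact lt_of_lt_of_le (div_pos (div_pos hnR hmR) hCpos) (le_csInf hSne hSlb)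
  -- inclusion of the event on u
  set cA : ℝ := Real.sqrt n * (δ₁ - δ₂) with hcA
  have hcA0 : 0 ≤ cA := mul_nonneg (Real.sqrt_nonneg _) hδdiff
  set Eset : Set (Fin m → ℝ) := {u : Fin m → ℝ | cA < euclNorm (A.mulVec u)} with hEset
  have hEsub : Eset ⊆ {u : Fin m → ℝ | κ * (δ₁ - δ₂) ^ 2 * m < ∑ j, u j ^ 2} := by
    intro u hu
    have hu' : cA < euclNorm (A.mulVec u) := hu
    have ha : 0 < euclNorm (A.mulVec u) := lt_of_le_of_lt hcA0 hu'
    set a : ℝ := euclNorm (A.mulVec u) with hadef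
    have hmem : (n / m : ℝ) * ∑ j, (a⁻¹ • u) j ^ 2 ∈ Sκ := by
      refine ⟨a⁻¹ • u, ?_, rfl⟩
      rw [Matrix.mulVec_smul, euclNorm_smul, abs_of_pos (inv_pos.mpr ha), ← hadef,
        inv_mul_cancel₀ ha.ne']
    have hκle : κ ≤ (n / m : ℝ) * ∑ j, (a⁻¹ • u) j ^ 2 :=
      le_trans (le_of_eq hκ) (csInf_le hSbdd hmem)
    have hexp : ∑ j, (a⁻¹ • u) j ^ 2 = a⁻¹ ^ 2 * ∑ j, u j ^ 2 := by
      rw [Finset.mul_sum]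
      refine Finset.sum_congr rfl fun j _ => ?_
      simp [Pi.smul_apply, smul_eq_mul]
      ring
    have hstep : κ * a ^ 2 ≤ (n / m : ℝ) * ∑ j, u j ^ 2 := by
      rw [hexp] at hκle
      have h1 := mul_le_mul_of_nonneg_right hκle (sq_nonneg a)
      have h2 : (n / m : ℝ) * (a⁻¹ ^ 2 * ∑ j, u j ^ 2) * a ^ 2
          = (n / m : ℝ) * ∑ j, u j ^ 2 := by
        have hane : a ≠ 0 := ha.ne'
        field_simp
      exact h2 ▸ h1
    rcases eq_or_lt_of_le hδ₂₁ with heq | hlt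
    · have hzero : δ₁ - δ₂ = 0 := by rw [← heq]; ring
      show κ * (δ₁ - δ₂) ^ 2 * m < ∑ j, u j ^ 2
      rw [hzero]
      have hAu : A.mulVec u ≠ 0 := by
        intro hz
        have hz2 : a = 0 := by rw [hadef, hz]; simp [euclNorm]
        exact ha.ne' hz2
      have hune : u ≠ 0 := fun h0 => hAu (by rw [h0, Matrix.mulVec_zero])
      simpa using sum_sq_pos hune
    · have hca2 : cA ^ 2 = n * (δ₁ - δ₂) ^ 2 := by
        rw [hcA, mul_pow, Real.sq_sqrt (Nat.cast_nonneg n)]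
      have haa : cA ^ 2 < a ^ 2 := by
        exact pow_lt_pow_left₀ hu' hcA0 (by norm_num)
      have hlt2 : κ * ((n:ℝ) * (δ₁ - δ₂) ^ 2) < κ * a ^ 2 := by
        rw [← hca2]
        exact mul_lt_mul_of_pos_left haa hκpos
      have hfinal : κ * ((n:ℝ) * (δ₁ - δ₂) ^ 2) < (n / m : ℝ) * ∑ j, u j ^ 2 :=
        lt_of_lt_of_le hlt2 hstep
      show κ * (δ₁ - δ₂) ^ 2 * m < ∑ j, u j ^ 2
      have h3 := mul_lt_mul_of_pos_right hfinal (div_pos hmR hnR)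
      have e1 : κ * ((n:ℝ) * (δ₁ - δ₂) ^ 2) * ((m:ℝ) / n) = κ * (δ₁ - δ₂) ^ 2 * m := by
        field_simp
      have e2 : (n / m : ℝ) * (∑ j, u j ^ 2) * ((m:ℝ) / n) = ∑ j, u j ^ 2 := by
        field_simp
      rw [e1, e2] at h3
      exact h3
  -- inclusion of the event on the noise
  have hBsub : {g : Fin n → ℝ | Real.sqrt n * δ₂ < euclNorm g}
      ⊆ {g : Fin n → ℝ | δ₂ ^ 2 * n < ∑ i, g i ^ 2} := by
    intro g hg
    have h := sq_sum_of_euclNorm_gt (mul_nonneg (Real.sqrt_nonneg _) hδ₂0) hg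
    show δ₂ ^ 2 * n < ∑ i, g i ^ 2
    calc δ₂ ^ 2 * n = (Real.sqrt n * δ₂) ^ 2 := by
          rw [mul_pow, Real.sq_sqrt (Nat.cast_nonneg n)]; ring
      _ < ∑ i, g i ^ 2 := h
  -- the two tail bounds
  have hs₁ : 0 ≤ κ * (δ₁ - δ₂) ^ 2 * m :=
    mul_nonneg (mul_nonneg hκpos.le (sq_nonneg _)) (Nat.cast_nonneg m)
  have hT1 : (∫⁻ u in Eset, ENNReal.ofReal (gaussDensity u 0 K_uu))
      ≤ ENNReal.ofReal (chiSqUpperTail m (κ * (δ₁ - δ₂) ^ 2 * m / lam₁)) :=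
    gauss_tail_le hKuuSymm hKuuPD hm hlam₁Ex hlam₁Le hs₁ hEsub
  have hs₂ : 0 ≤ δ₂ ^ 2 * (n:ℝ) := mul_nonneg (sq_nonneg _) (Nat.cast_nonneg n)
  have hT2 : (∫⁻ g in {g : Fin n → ℝ | Real.sqrt n * δ₂ < euclNorm g},
      ENNReal.ofReal (gaussDensity g 0 Sig))
      ≤ ENNReal.ofReal (chiSqUpperTail n (δ₂ ^ 2 * n / lam₂)) :=
    gauss_tail_le hSigSymm hSigPD hn hlam₂Ex hlam₂Le hs₂ hBsub
  set c₂ : ENNReal := ENNReal.ofReal (chiSqUpperTail n (δ₂ ^ 2 * n / lam₂)) with hc₂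
  set c₁ : ENNReal := ENNReal.ofReal (chiSqUpperTail m (κ * (δ₁ - δ₂) ^ 2 * m / lam₁)) with hc₁
  -- the inner lintegral bound
  have hInner : ∀ u : Fin m → ℝ,
      (∫⁻ f in {f : Fin n → ℝ | Real.sqrt n * δ₁ < euclNorm (f - W.mulVec u)},
        ENNReal.ofReal (gaussDensity f (Q.mulVec u) Sig))
      ≤ Set.indicator Eset (fun _ => (1:ENNReal)) u + c₂ := by
    intro u
    by_cases hu : u ∈ Eset
    · calc (∫⁻ f in {f : Fin n → ℝ | Real.sqrt n * δ₁ < euclNorm (f - W.mulVec u)},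
          ENNReal.ofReal (gaussDensity f (Q.mulVec u) Sig))
          ≤ ∫⁻ f : Fin n → ℝ, ENNReal.ofReal (gaussDensity f (Q.mulVec u) Sig) :=
            setLIntegral_le_lintegral _ _
        _ = 1 := gauss_shift_total hn hSigSymm hSigPD _
        _ ≤ Set.indicator Eset (fun _ => (1:ENNReal)) u + c₂ := by
            rw [Set.indicator_of_mem hu]
            exact le_self_add
    · have hsub : {f : Fin n → ℝ | Real.sqrt n * δ₁ < euclNorm (f - W.mulVec u)}
          ⊆ {f : Fin n → ℝ | Real.sqrt n * δ₂ < euclNorm (f - Q.mulVec u)} := by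
        intro f hf
        have hf' : Real.sqrt n * δ₁ < euclNorm (f - W.mulVec u) := hf
        have hWQ : f - W.mulVec u = (f - Q.mulVec u) - A.mulVec u := by
          rw [hAdef, Matrix.sub_mulVec]
          abel
        have htri : euclNorm (f - W.mulVec u)
            ≤ euclNorm (f - Q.mulVec u) + euclNorm (A.mulVec u) := by
          rw [hWQ]
          exact euclNorm_sub_le _ _
        have hAu : euclNorm (A.mulVec u) ≤ cA := not_lt.mp hu
        show Real.sqrt n * δ₂ < euclNorm (f - Q.mulVec u)
        have : Real.sqrt n * δ₂ = Real.sqrt n * δ₁ - cA := by rw [hcA]; ring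
        linarith
      calc (∫⁻ f in {f : Fin n → ℝ | Real.sqrt n * δ₁ < euclNorm (f - W.mulVec u)},
          ENNReal.ofReal (gaussDensity f (Q.mulVec u) Sig))
          ≤ ∫⁻ f in {f : Fin n → ℝ | Real.sqrt n * δ₂ < euclNorm (f - Q.mulVec u)},
            ENNReal.ofReal (gaussDensity f (Q.mulVec u) Sig) := lintegral_mono_set hsub
        _ = ∫⁻ g in {g : Fin n → ℝ | Real.sqrt n * δ₂ < euclNorm g},
            ENNReal.ofReal (gaussDensity g 0 Sig) :=
            gauss_shift_tail Sig (Q.mulVec u) (Real.sqrt n * δ₂)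
        _ ≤ c₂ := hT2
        _ ≤ Set.indicator Eset (fun _ => (1:ENNReal)) u + c₂ := le_add_self
  -- measurability of Eset
  have hEmeas : MeasurableSet Eset := by
    have hAm : Measurable fun u : Fin m → ℝ => A.mulVec u := by
      have h : (fun u : Fin m → ℝ => A.mulVec u) = ⇑(Matrix.mulVecLin A) := by
        funext u
        rw [Matrix.mulVecLin_apply]
      rw [h]
      exact (LinearMap.continuous_of_finiteDimensional _).measurable
    exact measurableSet_lt measurable_const (measurable_euclNorm.comp hAm)
  -- nonnegativity facts
  have hdensU : ∀ u : Fin m → ℝ, 0 ≤ gaussDensity u 0 K_uu := fun u =>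
    gaussDensity_nonneg hKuuPD.det_pos.le u 0
  have hdensF : ∀ (μv f : Fin n → ℝ), 0 ≤ gaussDensity f μv Sig := fun μv f =>
    gaussDensity_nonneg hSigPD.det_pos.le f μv
  set inner : (Fin m → ℝ) → ℝ := fun u =>
    ∫ f in {f : Fin n → ℝ | Real.sqrt n * δ₁ < euclNorm (f - W.mulVec u)},
      gaussDensity f (Q.mulVec u) Sig with hinner
  have hinner_nonneg : ∀ u, 0 ≤ inner u := fun u =>
    setIntegral_nonneg (measurableSet_lt measurable_const
      (measurable_euclNorm.comp (measurable_id.sub measurable_const)))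
      (fun f _ => hdensF _ f)
  -- step 0 : Bochner integral bounded by the lintegral
  have step0 : (∫ u : Fin m → ℝ, gaussDensity u 0 K_uu * inner u)
      ≤ (∫⁻ u : Fin m → ℝ,
          ENNReal.ofReal ‖gaussDensity u 0 K_uu * inner u‖).toReal := by
    refine le_trans (le_abs_self _) ?_
    have h := MeasureTheory.norm_integral_le_lintegral_norm
      (μ := (volume : Measure (Fin m → ℝ))) (fun u => gaussDensity u 0 K_uu * inner u)
    rwa [Real.norm_eq_abs] at h
  -- step 1 : pointwise bound on the integrand
  have step1 : ∀ u : Fin m → ℝ,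
      ENNReal.ofReal ‖gaussDensity u 0 K_uu * inner u‖
      ≤ ENNReal.ofReal (gaussDensity u 0 K_uu) *
          (Set.indicator Eset (fun _ => (1:ENNReal)) u + c₂) := by
    intro u
    rw [Real.norm_eq_abs, abs_of_nonneg (mul_nonneg (hdensU u) (hinner_nonneg u)),
      ENNReal.ofReal_mul (hdensU u)]
    refine mul_le_mul_right ?_ _
    -- bound ofReal (inner u) by the set lintegral
    have h1 : inner u ≤ (∫⁻ f in {f : Fin n → ℝ | Real.sqrt n * δ₁ < euclNorm (f - W.mulVec u)},
        ENNReal.ofReal (gaussDensity f (Q.mulVec u) Sig)).toReal := by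
      refine le_trans (le_abs_self _) ?_
      have h := MeasureTheory.norm_integral_le_lintegral_norm
        (μ := (volume : Measure (Fin n → ℝ)).restrict
          {f : Fin n → ℝ | Real.sqrt n * δ₁ < euclNorm (f - W.mulVec u)})
        (fun f => gaussDensity f (Q.mulVec u) Sig)
      rw [Real.norm_eq_abs] at h
      refine le_trans h (le_of_eq ?_)
      congr 1
      refine lintegral_congr fun f => ?_
      rw [Real.norm_eq_abs, abs_of_nonneg (hdensF _ f)]
    calc ENNReal.ofReal (inner u)
        ≤ ENNReal.ofReal ((∫⁻ f in {f : Fin n → ℝ |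
            Real.sqrt n * δ₁ < euclNorm (f - W.mulVec u)},
            ENNReal.ofReal (gaussDensity f (Q.mulVec u) Sig)).toReal) :=
          ENNReal.ofReal_le_ofReal h1
      _ ≤ ∫⁻ f in {f : Fin n → ℝ | Real.sqrt n * δ₁ < euclNorm (f - W.mulVec u)},
            ENNReal.ofReal (gaussDensity f (Q.mulVec u) Sig) := ENNReal.ofReal_toReal_le
      _ ≤ Set.indicator Eset (fun _ => (1:ENNReal)) u + c₂ := hInner u
  -- step 2 : the lintegral bound
  have hmeasU : Measurable fun u : Fin m → ℝ => ENNReal.ofReal (gaussDensity u 0 K_uu) :=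
    (measurable_gaussDensity 0 K_uu).ennreal_ofReal
  have step2 : (∫⁻ u : Fin m → ℝ,
      ENNReal.ofReal (gaussDensity u 0 K_uu) *
        (Set.indicator Eset (fun _ => (1:ENNReal)) u + c₂)) ≤ c₁ + c₂ := by
    have hsplit : (∫⁻ u : Fin m → ℝ,
        ENNReal.ofReal (gaussDensity u 0 K_uu) *
          (Set.indicator Eset (fun _ => (1:ENNReal)) u + c₂))
        = (∫⁻ u : Fin m → ℝ, ENNReal.ofReal (gaussDensity u 0 K_uu) *
            Set.indicator Eset (fun _ => (1:ENNReal)) u)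
          + ∫⁻ u : Fin m → ℝ, ENNReal.ofReal (gaussDensity u 0 K_uu) * c₂ := by
      rw [← lintegral_add_left (f := fun u => ENNReal.ofReal (gaussDensity u 0 K_uu) *
          Set.indicator Eset (fun _ => (1:ENNReal)) u) (hmeasU.mul (measurable_const.indicator hEmeas))]
      refine lintegral_congr fun u => ?_
      rw [mul_add]
    rw [hsplit]
    have hterm1 : (∫⁻ u : Fin m → ℝ, ENNReal.ofReal (gaussDensity u 0 K_uu) *
        Set.indicator Eset (fun _ => (1:ENNReal)) u) ≤ c₁ := by
      have heq : (∫⁻ u : Fin m → ℝ, ENNReal.ofReal (gaussDensity u 0 K_uu) *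
          Set.indicator Eset (fun _ => (1:ENNReal)) u)
          = ∫⁻ u in Eset, ENNReal.ofReal (gaussDensity u 0 K_uu) := by
        rw [← lintegral_indicator hEmeas]
        refine lintegral_congr fun u => ?_
        by_cases h : u ∈ Eset
        · rw [Set.indicator_of_mem h, Set.indicator_of_mem h, mul_one]
        · rw [Set.indicator_of_notMem h, Set.indicator_of_notMem h, mul_zero]
      rw [heq]
      exact hT1
    have hterm2 : (∫⁻ u : Fin m → ℝ, ENNReal.ofReal (gaussDensity u 0 K_uu) * c₂) = c₂ := by
      rw [lintegral_mul_const' c₂ _ ENNReal.ofReal_ne_top,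
        gauss_total hKuuSymm hKuuPD hm, one_mul]
    exact add_le_add hterm1 (le_of_eq hterm2)
  -- put everything together
  have hfin : (∫⁻ u : Fin m → ℝ,
      ENNReal.ofReal ‖gaussDensity u 0 K_uu * inner u‖) ≤ c₁ + c₂ :=
    le_trans (lintegral_mono step1) step2
  have hne_top : c₁ + c₂ ≠ ⊤ := by
    rw [hc₁, hc₂]
    exact (ENNReal.add_lt_top.mpr ⟨ENNReal.ofReal_lt_top, ENNReal.ofReal_lt_top⟩).ne
  have := le_trans step0 (ENNReal.toReal_mono hne_top hfin)
  refine le_trans this ?_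
  rw [hc₁, hc₂, ← ENNReal.ofReal_add
    (chiSqUpperTail_nonneg m (div_nonneg hs₁ hlam₁.le))
    (chiSqUpperTail_nonneg n (div_nonneg hs₂ hlam₂.le))]
  exact le_of_eq (ENNReal.toReal_ofReal (add_nonneg
    (chiSqUpperTail_nonneg m (div_nonneg hs₁ hlam₁.le))
    (chiSqUpperTail_nonneg n (div_nonneg hs₂ hlam₂.le))))
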